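/- arXiv:1106.6037 — 3 statements merged into one kernel-verified Lean document; each statement's English description precedes it below -/
import Mathlib

section
/- Let σ ≥ 1 and n ≥ 1. Consider a walk on the torus (ZMod n) × (ZMod n) defined by p 0 = q₀ and p (k+1) = p k + d (f^[k] s₀), where f : Fin σ → Fin σ and d : Fin σ → (ZMod n) × (ZMod n). Then the set of points visited by the walk, {p k : k ∈ ℕ}, has cardinality at most σ·(n+1). -/
/-!
The state sequence `f^[k] s₀` lives in a set of `σ` elements, so it becomes periodic with some
period `t` after some pre-period `i`, where `i + t ≤ σ`. From then on each period shifts the walk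
by the same drift `v`, and `n • v = 0` on the torus, so the walk is periodic with period `n * t`
after time `i`. Hence it visits only the points `p k` with `k < i + n * t ≤ σ + n * σ`.
-/

theorem Function.exists_iterate_add_eq_iterate {α : Type*} [Fintype α] (f : α → α) (s : α) :
    ∃ i t, 0 < t ∧ i + t ≤ Fintype.card α ∧ f^[i + t] s = f^[i] s := by
  obtain ⟨a, b, hab, heq⟩ :=
    Fintype.exists_ne_map_eq_of_card_lt (fun k : Fin (Fintype.card α + 1) => f^[k] s) (by simp)
  rcases Fin.lt_or_lt_of_ne hab with h | h
  · exact ⟨a, b - a, by omega, by omega, by rw [Nat.add_sub_cancel' h.le]; exact heq.symm⟩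
  · exact ⟨b, a - b, by omega, by omega, by rw [Nat.add_sub_cancel' h.le]; exact heq⟩

section Walk

variable {α G : Type*} [AddCommGroup G] {f : α → α} {d : α → G} {s : α} {p : ℕ → G}

theorem walk_add_period (hstep : ∀ k, p (k + 1) = p k + d (f^[k] s)) {i t : ℕ}
    (hcycle : f^[i + t] s = f^[i] s) (k : ℕ) :
    p (i + k + t) = p (i + k) + (p (i + t) - p i) := by
  induction k with
  | zero => simp
  | succ k ih =>
    have hstate : f^[i + k + t] s = f^[i + k] s := by
      rw [show i + k + t = k + (i + t) by omega, show i + k = k + i by omega,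
        Function.iterate_add_apply, hcycle, ← Function.iterate_add_apply]
    rw [show i + (k + 1) + t = i + k + t + 1 by omega, ← add_assoc, hstep, hstep, ih, hstate]
    abel

theorem walk_add_mul_period (hstep : ∀ k, p (k + 1) = p k + d (f^[k] s)) {i t : ℕ}
    (hcycle : f^[i + t] s = f^[i] s) (k m : ℕ) :
    p (i + k + m * t) = p (i + k) + m • (p (i + t) - p i) := by
  induction m with
  | zero => simp
  | succ m ih =>
    rw [show i + k + (m + 1) * t = i + (k + m * t) + t by ring, walk_add_period hstep hcycle,
      ← add_assoc, ih, succ_nsmul, add_assoc]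

end Walk

theorem exists_lt_apply_eq_of_periodic_from {β : Type*} {p : ℕ → β} {i T : ℕ} (hT : 0 < T)
    (hper : ∀ k, p (i + k + T) = p (i + k)) (k : ℕ) : ∃ k' < i + T, p k' = p k := by
  induction k using Nat.strong_induction_on with
  | _ k ih =>
    by_cases hk : k < i + T
    · exact ⟨k, hk, rfl⟩
    · obtain ⟨k', hk', hk'eq⟩ := ih (k - T) (by omega)
      refine ⟨k', hk', hk'eq.trans ?_⟩
      have := hper (k - T - i)
      rwa [show i + (k - T - i) = k - T by omega, show k - T + T = k by omega, eq_comm] at this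

theorem range_eq_image_range_of_periodic_from {β : Type*} [DecidableEq β] {p : ℕ → β} {i T : ℕ}
    (hT : 0 < T) (hper : ∀ k, p (i + k + T) = p (i + k)) :
    Set.range p = ((Finset.range (i + T)).image p : Set β) := by
  ext x
  simp only [Set.mem_range, Finset.coe_image, Finset.coe_range, Set.mem_image, Set.mem_Iio]
  constructor
  · rintro ⟨k, rfl⟩
    exact exists_lt_apply_eq_of_periodic_from hT hper k
  · rintro ⟨k, -, rfl⟩
    exact ⟨k, rfl⟩

theorem stmt_5_general (σ n : ℕ) (hn : 1 ≤ n)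
    (f : Fin σ → Fin σ) (d : Fin σ → ZMod n × ZMod n) (s₀ : Fin σ)
    (p : ℕ → ZMod n × ZMod n)
    (hstep : ∀ k, p (k + 1) = p k + d (f^[k] s₀)) :
    (Set.range p).Finite ∧ (Set.range p).ncard ≤ σ * (n + 1) := by
  classical
  obtain ⟨i, t, ht, hit, hcycle⟩ := f.exists_iterate_add_eq_iterate s₀
  rw [Fintype.card_fin] at hit
  have htorus : ∀ x : ZMod n × ZMod n, n • x = 0 := fun x => Prod.ext (by simp) (by simp)
  have hper : ∀ k, p (i + k + n * t) = p (i + k) := fun k => by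
    rw [walk_add_mul_period hstep hcycle, htorus, add_zero]
  rw [range_eq_image_range_of_periodic_from (by positivity) hper]
  refine ⟨Finset.finite_toSet _, ?_⟩
  calc _ ≤ i + n * t := by
        rw [Set.ncard_coe_finset]
        exact Finset.card_image_le.trans (Finset.card_range _).le
    _ ≤ σ * (n + 1) := by nlinarith

theorem stmt_5 (σ n : ℕ) (hσ : 1 ≤ σ) (hn : 1 ≤ n)
    (f : Fin σ → Fin σ) (d : Fin σ → ZMod n × ZMod n) (s₀ : Fin σ)
    (q₀ : ZMod n × ZMod n) (p : ℕ → ZMod n × ZMod n) (hp0 : p 0 = q₀)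
    (hstep : ∀ k, p (k + 1) = p k + d (f^[k] s₀)) :
    (Set.range p).Finite ∧ (Set.range p).ncard ≤ σ * (n + 1) :=
  stmt_5_general σ n hn f d s₀ p hstep
end

section
/- Let n, m ≥ 3 and let b be a vertex of the torus (ZMod n) × (ZMod m). Define West(v) = v − (0,1) and North(v) = v − (1,0). If the set of token-marked nodes is exactly S = {West(b), North(b)}, then b is the unique vertex v such that both West(v) ∈ S and North(v) ∈ S. -/
/-! A node v ≠ b whose West and North neighbours both carry tokens would have to swap them,
West(v) = North(b) and North(v) = West(b), which forces 2 • (0, 1) = 2 • (1, 0), i.e. 2 = 0 in `ZMod n`. -/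

theorem sub_mem_pair_and_sub_mem_pair_iff {G : Type*} [AddCommGroup G] {x y : G}
    (hxy : 2 • x ≠ 2 • y) (b v : G) :
    (v - x ∈ ({b - x, b - y} : Set G) ∧ v - y ∈ ({b - x, b - y} : Set G)) ↔ v = b := by
  simp only [Set.mem_insert_iff, Set.mem_singleton_iff]
  constructor
  · rintro ⟨hx | hx, hy | hy⟩
    · exact sub_left_injective hx
    · exact sub_left_injective hx
    · have hneg : x - y = y - x := by
        rw [← sub_sub_sub_cancel_left x y v, hx, hy, sub_sub_sub_cancel_left]
      refine absurd ?_ hxy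
      rw [← sub_eq_zero, ← smul_sub, two_nsmul]
      nth_rw 2 [hneg]
      exact (sub_add_sub_cancel x y x).trans (sub_self x)
    · rw [sub_left_injective hy, sub_right_inj] at hx
      exact absurd (congrArg (2 • ·) hx) hxy
  · rintro rfl
    exact ⟨.inl rfl, .inr rfl⟩

theorem ZMod.two_ne_zero_of_three_le {n : ℕ} (hn : 3 ≤ n) : (2 : ZMod n) ≠ 0 := by
  have : Fact (1 < n) := ⟨by omega⟩
  rw [Ne, ← ZMod.val_eq_zero, ZMod.val_two_eq_two_mod, Nat.mod_eq_of_lt hn]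
  omega

theorem stmt_10_general (n m : ℕ) (hn : 3 ≤ n) (b : ZMod n × ZMod m) :
    ∀ v : ZMod n × ZMod m,
      (v - (0, 1) ∈ ({b - (0, 1), b - (1, 0)} : Set (ZMod n × ZMod m)) ∧
       v - (1, 0) ∈ ({b - (0, 1), b - (1, 0)} : Set (ZMod n × ZMod m))) ↔ v = b := by
  refine sub_mem_pair_and_sub_mem_pair_iff (fun h ↦ ZMod.two_ne_zero_of_three_le hn ?_) b
  simpa using (congrArg Prod.fst h).symm

theorem stmt_10 (n m : ℕ) (hn : 3 ≤ n) (hm : 3 ≤ m) (b : ZMod n × ZMod m) :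
    ∀ v : ZMod n × ZMod m,
      (v - (0, 1) ∈ ({b - (0, 1), b - (1, 0)} : Set (ZMod n × ZMod m)) ∧
       v - (1, 0) ∈ ({b - (0, 1), b - (1, 0)} : Set (ZMod n × ZMod m))) ↔ v = b :=
  stmt_10_general n m hn b
end

section
/- Let N ≥ 1 and let H ⊆ ZMod N with |H| = k ≥ 1. For a walker starting at h₀ ∈ H and moving by +1 each step, if after some number T of steps the walker has encountered members of H exactly q·k times for a positive integer q, and T is the least such time, then T = q·N and the walker is back at h₀. -/
/-!
The hitting predicate `t ↦ h₀ + t ∈ H` is `N`-periodic in the step count, and on one period the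
walker visits every residue exactly once, so it meets `H` exactly `k` times per lap and `q * k`
times in `q` laps. An earlier time `T` with the same count would have to see the same hits as
time `q * N`, but the walker is back on `h₀ ∈ H` at time `q * N`, a hit that `T` misses.
-/

open Finset

namespace Nat

theorem filter_Ico_card_eq_mul_count_of_periodic (n a m : ℕ) (p : ℕ → Prop) [DecidablePred p]
    (pp : Function.Periodic p a) : #{x ∈ Ico n (n + m * a) | p x} = m * a.count p := by
  induction m with
  | zero => simp
  | succ m ih =>
    rw [add_one_mul, ← add_assoc, ← Ico_union_Ico_eq_Ico (Nat.le_add_right n _) le_self_add,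
      filter_union, card_union_of_disjoint
        (disjoint_filter_filter (Ico_disjoint_Ico_consecutive _ _ _)),
      ih, filter_Ico_card_eq_of_periodic _ _ p pp, add_one_mul]

theorem eq_of_isLeast_card_filter_Icc {p : ℕ → Prop} [DecidablePred p] {n c T : ℕ} (hp : p n)
    (hn : #{t ∈ Icc 1 n | p t} = c) (hT : IsLeast {T | #{t ∈ Icc 1 T | p t} = c} T) :
    T = n := by
  have hTn : T ≤ n := hT.2 hn
  have hsub : {t ∈ Icc 1 T | p t} ⊆ {t ∈ Icc 1 n | p t} :=
    filter_subset_filter _ (Icc_subset_Icc_right hTn)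
  have heq : {t ∈ Icc 1 T | p t} = {t ∈ Icc 1 n | p t} :=
    eq_of_subset_of_card_le hsub (by rw [hn, hT.1])
  rcases Nat.eq_zero_or_pos n with rfl | hn_pos
  · omega
  · have hn_mem : n ∈ {t ∈ Icc 1 T | p t} :=
      heq ▸ mem_filter.2 ⟨mem_Icc.2 ⟨hn_pos, le_rfl⟩, hp⟩
    have hnT : n ≤ T := (mem_Icc.1 (mem_filter.1 hn_mem).1).2
    omega

end Nat

namespace ZMod

variable {N : ℕ}

theorem periodic_add_natCast_mem (x : ZMod N) (H : Finset (ZMod N)) :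
    Function.Periodic (fun t : ℕ => x + (t : ZMod N) ∈ H) N := by
  intro t
  simp

theorem count_add_natCast_mem [NeZero N] (x : ZMod N) (H : Finset (ZMod N)) :
    N.count (fun t : ℕ => x + (t : ZMod N) ∈ H) = #H := by
  rw [Nat.count_eq_card_filter_range]
  refine card_nbij' (fun t => x + t) (fun y => (y - x).val) ?_ ?_ ?_ ?_
  · intro t ht
    exact (mem_filter.1 ht).2
  · intro y hy
    simpa [ZMod.val_lt] using hy
  · intro t ht
    simp [ZMod.val_cast_of_lt (mem_range.1 (mem_filter.1 ht).1)]
  · intro y _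
    simp

theorem card_filter_Icc_add_natCast_mem [NeZero N] (x : ZMod N) (H : Finset (ZMod N)) (m : ℕ) :
    #((Icc 1 (m * N)).filter fun t : ℕ => x + (t : ZMod N) ∈ H) = m * #H := by
  rw [← Finset.Ico_add_one_right_eq_Icc, add_comm (m * N),
    Nat.filter_Ico_card_eq_mul_count_of_periodic _ _ _ _ (periodic_add_natCast_mem x H),
    count_add_natCast_mem]

end ZMod

theorem stmt_13_general (N : ℕ) (hN : 1 ≤ N) (H : Finset (ZMod N)) (k : ℕ)
    (hH : H.card = k) (h₀ : ZMod N) (hh₀ : h₀ ∈ H) (q : ℕ) (T : ℕ)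
    (hT : IsLeast {T : ℕ |
        ((Finset.Icc 1 T).filter (fun t : ℕ => h₀ + (t : ZMod N) ∈ H)).card = q * k} T) :
    T = q * N ∧ h₀ + (T : ZMod N) = h₀ := by
  have : NeZero N := ⟨by omega⟩
  have hreturn : h₀ + ((q * N : ℕ) : ZMod N) = h₀ := by simp
  have hTqN : T = q * N :=
    Nat.eq_of_isLeast_card_filter_Icc (by rw [hreturn]; exact hh₀)
      (by rw [ZMod.card_filter_Icc_add_natCast_mem, hH]) hT
  exact ⟨hTqN, hTqN ▸ hreturn⟩

theorem stmt_13 (N : ℕ) (hN : 1 ≤ N) (H : Finset (ZMod N)) (k : ℕ) (hk : 1 ≤ k)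
    (hH : H.card = k) (h₀ : ZMod N) (hh₀ : h₀ ∈ H) (q : ℕ) (hq : 0 < q) (T : ℕ)
    (hT : IsLeast {T : ℕ |
        ((Finset.Icc 1 T).filter (fun t : ℕ => h₀ + (t : ZMod N) ∈ H)).card = q * k} T) :
    T = q * N ∧ h₀ + (T : ZMod N) = h₀ :=
  stmt_13_general N hN H k hH h₀ hh₀ q T hT
end
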